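/- arXiv:2203.02111 — 2 statements merged into one kernel-verified Lean document; each statement's English description precedes it below -/
import Mathlib

section
/- Let W ∈ ℝ^{N×N}, A ∈ ℝ^{n×n}, H ∈ ℝ^{n×m}, C ∈ ℝ^{m×n}, h > 0, and Φ = I_N ⊗ e^{Ah} + W ⊗ 𝓗(h). Suppose λ, θ ∈ ℂ, v(1), …, v(α) ∈ ℂ^{1×N} is a left Jordan chain of W at λ (i.e., v(1)W = λ v(1) and v(k)W = λ v(k) + v(k−1) for k = 2, …, α), and ξ(1), …, ξ(γ) ∈ ℂ^{1×n} is a generalized left Jordan chain of E = e^{Ah} + λ·𝓗(h) about 𝓗(h) at θ (i.e., ξ(1)E = θ ξ(1) and ξ(k)E + ξ(k−1)𝓗(h) = θ ξ(k) for k = 2, …, γ). Then for every k with 1 ≤ k ≤ min(α, γ), the row vector η(k) = Σ_{l=1}^{k} v(l) ⊗ ξ(k+1−l) satisfies η(k)·Φ = θ·η(k); in particular every nonzero η(k) is a left eigenvector of Φ associated with θ. -/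
open Matrix
open scoped Kronecker

/-- Matrix exponential of a real square matrix. -/
noncomputable def matExp {k : Type*} [Fintype k] [DecidableEq k]
    (A : Matrix k k ℝ) : Matrix k k ℝ := NormedSpace.exp A

/-- Entrywise integral `∫₀ʰ e^{Aτ} dτ`. -/
noncomputable def intExp {k : Type*} [Fintype k] [DecidableEq k]
    (A : Matrix k k ℝ) (h : ℝ) : Matrix k k ℝ :=
  Matrix.of fun i j => ∫ τ in (0:ℝ)..h, matExp (τ • A) i j

/-- A real matrix regarded as a complex matrix entrywise. -/
def cmap {a b : Type*} (M : Matrix a b ℝ) : Matrix a b ℂ := M.map Complex.ofReal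

/-- `θ` is a (complex) eigenvalue of the complex matrix `M`. -/
def IsEig {k : Type*} [Fintype k] (M : Matrix k k ℂ) (θ : ℂ) : Prop :=
  ∃ v : k → ℂ, v ≠ 0 ∧ M.mulVec v = θ • v

/-- Controllability of the discrete-time linear system `x(k+1) = F x(k) + G u(k)`:
every target state can be reached from every initial state in finite time. -/
def Controllable {q r : Type*} [Fintype q] [Fintype r]
    (F : Matrix q q ℝ) (G : Matrix q r ℝ) : Prop :=
  ∀ x₀ xf : q → ℝ, ∃ (T : ℕ) (u : ℕ → r → ℝ) (x : ℕ → q → ℝ),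
    x 0 = x₀ ∧ (∀ k, x (k + 1) = F.mulVec (x k) + G.mulVec (u k)) ∧ x T = xf

/-!
Write `S = 𝓗(h)` and extend both chains by `v 0 = 0`, `ξ 0 = 0`; the chain relations then read
`v_l W = μ v_l + v_{l-1}` and `ξ_j (e^{Ah} + μ S) = θ ξ_j - ξ_{j-1} S` uniformly for `l, j ≥ 1`.
Since `(a ⊗ b)(I ⊗ E + W ⊗ S) = a ⊗ bE + aW ⊗ bS`, the `l`-th summand of `η_k` is mapped to
`θ (v_l ⊗ ξ_{k+1-l}) - (f (l+1) - f l)` with `f l = v_{l-1} ⊗ ξ_{k+1-l} S`, and these corrections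
telescope to `f (k+1) - f 1 = v_k ⊗ ξ_0 S - v_0 ⊗ ξ_k S = 0`.
-/

open Finset

section VecKron

variable {R ι κ ι' κ' : Type*} [CommSemiring R]

def vecKron : (ι → R) →ₗ[R] (κ → R) →ₗ[R] ι × κ → R :=
  LinearMap.mk₂ R (fun a b q => a q.1 * b q.2)
    (fun _ _ _ => by ext; simp [add_mul]) (fun _ _ _ => by ext; simp [mul_assoc])
    (fun _ _ _ => by ext; simp [mul_add]) (fun _ _ _ => by ext; simp [mul_left_comm])

@[simp]
theorem vecKron_apply (a : ι → R) (b : κ → R) (q : ι × κ) : vecKron a b q = a q.1 * b q.2 :=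
  rfl

theorem vecKron_vecMul_kronecker [Fintype ι] [Fintype κ] (a : ι → R) (b : κ → R)
    (M : Matrix ι ι' R) (P : Matrix κ κ' R) :
    vecKron a b ᵥ* (M ⊗ₖ P) = vecKron (a ᵥ* M) (b ᵥ* P) := by
  ext ⟨i, j⟩
  simp only [vecMul, dotProduct, vecKron_apply, kroneckerMap_apply, Fintype.sum_prod_type,
    sum_mul_sum]
  exact sum_congr rfl fun _ _ => sum_congr rfl fun _ _ => by ring

end VecKron

section JordanChain

variable {R ι κ : Type*} [CommRing R] [Fintype ι] [Fintype κ] [DecidableEq ι]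

theorem sum_vecKron_vecMul_kronecker_eq_smul (W : Matrix ι ι R) (E S : Matrix κ κ R)
    {μ θ : R} {v : ℕ → ι → R} {ξ : ℕ → κ → R} {k : ℕ} (hv₀ : v 0 = 0) (hξ₀ : ξ 0 = 0)
    (hv : ∀ l ∈ Icc 1 k, v l ᵥ* W = μ • v l + v (l - 1))
    (hξ : ∀ l ∈ Icc 1 k, ξ l ᵥ* (E + μ • S) + ξ (l - 1) ᵥ* S = θ • ξ l) :
    (∑ l ∈ Icc 1 k, vecKron (v l) (ξ (k + 1 - l))) ᵥ* (1 ⊗ₖ E + W ⊗ₖ S)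
      = θ • ∑ l ∈ Icc 1 k, vecKron (v l) (ξ (k + 1 - l)) := by
  set f : ℕ → ι × κ → R := fun l => vecKron (v (l - 1)) (ξ (k + 1 - l) ᵥ* S)
  have hterm : ∀ l ∈ Icc 1 k, vecKron (v l) (ξ (k + 1 - l)) ᵥ* (1 ⊗ₖ E + W ⊗ₖ S)
      = θ • vecKron (v l) (ξ (k + 1 - l)) - (f (l + 1) - f l) := by
    intro l hl
    have hl_bounds := mem_Icc.mp hl
    have hξl := hξ (k + 1 - l) (mem_Icc.mpr ⟨by omega, by omega⟩)
    rw [show k + 1 - l - 1 = k - l by omega, vecMul_add, vecMul_smul,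
      ← eq_sub_iff_add_eq, ← eq_sub_iff_add_eq] at hξl
    rw [vecMul_add, vecKron_vecMul_kronecker, vecKron_vecMul_kronecker, vecMul_one, hv l hl, hξl]
    simp only [f, show l + 1 - 1 = l by omega, show k + 1 - (l + 1) = k - l by omega, map_add,
      map_smul, map_sub, LinearMap.add_apply, LinearMap.smul_apply]
    abel
  rw [sum_vecMul, sum_congr rfl hterm, sum_sub_distrib, ← Ico_add_one_right_eq_Icc,
    sum_Ico_sub f (by omega), ← smul_sum]
  simp [f, hv₀, hξ₀]

end JordanChain

theorem forall_Icc_update_zero {M : Type*} [Zero M] {u : ℕ → M} {r : M → M → Prop} {α : ℕ}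
    (h₁ : r (u 1) 0) (hsucc : ∀ k, 2 ≤ k → k ≤ α → r (u k) (u (k - 1))) :
    ∀ l ∈ Icc 1 α, r (Function.update u 0 0 l) (Function.update u 0 0 (l - 1)) := by
  intro l hl
  rw [mem_Icc] at hl
  rcases hl.1.eq_or_lt with rfl | hl₂
  · simpa using h₁
  · simpa [Function.update_of_ne (by omega : l ≠ 0), Function.update_of_ne (by omega : l - 1 ≠ 0)]
      using hsucc l hl₂ hl.2

theorem cmap_one_kronecker_add_kronecker {ι κ : Type*} [DecidableEq ι]
    (E : Matrix κ κ ℝ) (W : Matrix ι ι ℝ) (S : Matrix κ κ ℝ) :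
    cmap ((1 : Matrix ι ι ℝ) ⊗ₖ E + W ⊗ₖ S) = 1 ⊗ₖ cmap E + cmap W ⊗ₖ cmap S := by
  ext ⟨i, j⟩ ⟨i', j'⟩
  simp [cmap, one_apply, apply_ite]

theorem left_eigenvectors_of_singleLayer_sampled_general
    (N n m : ℕ) (W : Matrix (Fin N) (Fin N) ℝ)
    (A : Matrix (Fin n) (Fin n) ℝ) (H : Matrix (Fin n) (Fin m) ℝ)
    (C : Matrix (Fin m) (Fin n) ℝ) (h : ℝ)
    (μ θ : ℂ) (α γ : ℕ)
    (v : ℕ → Fin N → ℂ) (ξ : ℕ → Fin n → ℂ)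
    -- left Jordan chain of W at μ
    (hv1 : v 1 ᵥ* cmap W = μ • v 1)
    (hvk : ∀ k, 2 ≤ k → k ≤ α → v k ᵥ* cmap W = μ • v k + v (k - 1))
    -- generalized left Jordan chain of E = e^{Ah} + μ·𝓗(h) about 𝓗(h) at θ
    (hξ1 : ξ 1 ᵥ* (cmap (matExp (h • A)) + μ • cmap (intExp A h * H * C)) = θ • ξ 1)
    (hξk : ∀ k, 2 ≤ k → k ≤ γ →
      ξ k ᵥ* (cmap (matExp (h • A)) + μ • cmap (intExp A h * H * C))
        + ξ (k - 1) ᵥ* cmap (intExp A h * H * C) = θ • ξ k)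
    (η : ℕ → Fin N × Fin n → ℂ)
    (hη : ∀ k, η k = fun q => ∑ l ∈ Finset.Icc 1 k, v l q.1 * ξ (k + 1 - l) q.2) :
    ∀ k, 1 ≤ k → k ≤ min α γ →
      η k ᵥ* cmap ((1 : Matrix (Fin N) (Fin N) ℝ) ⊗ₖ matExp (h • A)
          + W ⊗ₖ (intExp A h * H * C)) = θ • η k := by
  intro k _ hk
  have hv := forall_Icc_update_zero (r := fun x y => x ᵥ* cmap W = μ • x + y)
    (by simpa using hv1) hvk
  have hξ := forall_Icc_update_zero
    (r := fun x y => x ᵥ* (cmap (matExp (h • A)) + μ • cmap (intExp A h * H * C))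
      + y ᵥ* cmap (intExp A h * H * C) = θ • x) (by simpa using hξ1) hξk
  have hηk : η k = ∑ l ∈ Icc 1 k,
      vecKron (Function.update v 0 0 l) (Function.update ξ 0 0 (k + 1 - l)) := by
    ext q
    simp only [hη, Finset.sum_apply, vecKron_apply]
    refine sum_congr rfl fun l hl => ?_
    rw [Function.update_of_ne (by grind), Function.update_of_ne (by grind)]
  rw [hηk, cmap_one_kronecker_add_kronecker]
  exact sum_vecKron_vecMul_kronecker_eq_smul _ _ _ (by simp) (by simp)
    (fun l hl => hv l (Icc_subset_Icc_right (hk.trans (min_le_left _ _)) hl))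
    (fun l hl => hξ l (Icc_subset_Icc_right (hk.trans (min_le_right _ _)) hl))

/-- left Jordan chains of `W` combined with generalized left Jordan chains of
`E = e^{Ah} + λ𝓗(h)` about `𝓗(h)` produce left (generalized) eigenvectors of
`Φ = I_N ⊗ e^{Ah} + W ⊗ 𝓗(h)`. -/
theorem left_eigenvectors_of_singleLayer_sampled
    (N n m : ℕ) (W : Matrix (Fin N) (Fin N) ℝ)
    (A : Matrix (Fin n) (Fin n) ℝ) (H : Matrix (Fin n) (Fin m) ℝ)
    (C : Matrix (Fin m) (Fin n) ℝ) (h : ℝ) (hh : 0 < h)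
    (μ θ : ℂ) (α γ : ℕ)
    (v : ℕ → Fin N → ℂ) (ξ : ℕ → Fin n → ℂ)
    -- left Jordan chain of W at μ
    (hv1 : v 1 ᵥ* cmap W = μ • v 1)
    (hvk : ∀ k, 2 ≤ k → k ≤ α → v k ᵥ* cmap W = μ • v k + v (k - 1))
    -- generalized left Jordan chain of E = e^{Ah} + μ·𝓗(h) about 𝓗(h) at θ
    (hξ1 : ξ 1 ᵥ* (cmap (matExp (h • A)) + μ • cmap (intExp A h * H * C)) = θ • ξ 1)
    (hξk : ∀ k, 2 ≤ k → k ≤ γ →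
      ξ k ᵥ* (cmap (matExp (h • A)) + μ • cmap (intExp A h * H * C))
        + ξ (k - 1) ᵥ* cmap (intExp A h * H * C) = θ • ξ k)
    (η : ℕ → Fin N × Fin n → ℂ)
    (hη : ∀ k, η k = fun q => ∑ l ∈ Finset.Icc 1 k, v l q.1 * ξ (k + 1 - l) q.2) :
    ∀ k, 1 ≤ k → k ≤ min α γ →
      η k ᵥ* cmap ((1 : Matrix (Fin N) (Fin N) ℝ) ⊗ₖ matExp (h • A)
          + W ⊗ₖ (intExp A h * H * C)) = θ • η k :=
  left_eigenvectors_of_singleLayer_sampled_general N n m W A H C h μ θ α γ v ξ hv1 hvk hξ1 hξk η hη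
end

section
/- Consider the two-layer drive-response networked sampled-data system with state matrix Φ_s = [[Φ^{1,1}, 0], [Φ^{2,1}, Φ^{2,2}]] and input matrix Ψ_s = diag(Ψ^{1,1}, Ψ^{2,2}), and assume 0 is not an eigenvalue of Φ_s (i.e., Φ_s is invertible). Then the discrete-time system x(k+1) = Φ_s x(k) + Ψ_s u(k) is controllable if and only if both of the following hold: (1) for every θ ∈ ℂ and every nonzero row vector η ∈ ℂ^{1×Nn} with η Φ^{1,1} = θ η, one has η Ψ^{1,1} ≠ 0; and (2) for every θ ∈ ℂ, every nonzero η ∈ ℂ^{1×Nn} with η Φ^{2,2} = θ η, and every ξ ∈ ℂ^{1×Nn} with ξ(θ I_{Nn} − Φ^{1,1}) = η Φ^{2,1}, the concatenated row vector [ξ Ψ^{1,1}, η Ψ^{2,2}] is nonzero. -/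
open Matrix
open scoped Kronecker

/-!
Controllability of `x(k+1) = F x(k) + G u(k)` is equivalent to the triviality of the left kernel
of the Kalman matrix `[G, FG, F²G, …]`: a nonzero `w` with `w Fʲ G = 0` for all `j` is orthogonal
to every state reachable from the origin, while if the kernel is trivial the increasing chain of
subspaces reachable in `T` steps stabilises at the whole space. Over `ℂ` the kernel is invariant
under `η ↦ η F`, so it is nonzero exactly when it contains a left eigenvector of `F`: this is the
PBH test. For the block lower-triangular `Φ_s`, a left eigenvector `[ξ, η]` either has `η = 0`, and
then `ξ` is a left eigenvector of `Φ¹¹`, or `η` is a left eigenvector of `Φ²²` and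
`ξ (θ - Φ¹¹) = η Φ²¹`; this splits the PBH condition into the two conditions of the theorem.
-/

open Matrix

theorem Sum.elim_eq_elim_iff {α β γ : Type*} {f f' : α → γ} {g g' : β → γ} :
    Sum.elim f g = Sum.elim f' g' ↔ f = f' ∧ g = g' :=
  ⟨fun h => ⟨congrArg (· ∘ Sum.inl) h, congrArg (· ∘ Sum.inr) h⟩, fun ⟨hf, hg⟩ => hf ▸ hg ▸ rfl⟩

theorem Sum.elim_eq_zero_iff {α β γ : Type*} [Zero γ] {f : α → γ} {g : β → γ} :
    Sum.elim f g = 0 ↔ f = 0 ∧ g = 0 := by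
  rw [← Sum.elim_zero_zero, Sum.elim_eq_elim_iff]

theorem Sum.smul_elim {α β M γ : Type*} [SMul M γ] (c : M) (f : α → γ) (g : β → γ) :
    c • Sum.elim f g = Sum.elim (c • f) (c • g) :=
  Sum.comp_elim (c • ·) f g

theorem Submodule.eq_top_of_forall_dotProduct_eq_zero {K ι : Type*} [Field K] [Fintype ι]
    {p : Submodule K (ι → K)} (h : ∀ w : ι → K, (∀ v ∈ p, w ⬝ᵥ v = 0) → w = 0) : p = ⊤ := by
  classical
  by_contra hp
  obtain ⟨f, hf, hpf⟩ := p.exists_le_ker_of_lt_top (lt_top_iff_ne_top.2 hp)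
  set w : ι → K := fun i => f fun j => if i = j then 1 else 0
  have hfw : ∀ v, f v = w ⬝ᵥ v := fun v => by
    simp [f.pi_apply_eq_sum_univ v, w, dotProduct, mul_comm]
  have hw : w = 0 := h w fun v hv => (hfw v).symm.trans (hpf hv)
  exact hf (LinearMap.ext fun v => by rw [hfw, hw, zero_dotProduct, LinearMap.zero_apply])

section LeftKernel

variable {K q r : Type*} [Fintype q] [DecidableEq q]

def kalmanLeftKernel [CommRing K] (F : Matrix q q K) (G : Matrix q r K) : Submodule K (q → K) :=
  ⨅ j : ℕ, LinearMap.ker (F ^ j * G).vecMulLinear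

theorem mem_kalmanLeftKernel [CommRing K] {F : Matrix q q K} {G : Matrix q r K} {η : q → K} :
    η ∈ kalmanLeftKernel F G ↔ ∀ j : ℕ, η ᵥ* (F ^ j * G) = 0 := by
  simp [kalmanLeftKernel, Submodule.mem_iInf]

theorem vecMul_pow_of_vecMul_eq_smul [CommRing K] {F : Matrix q q K} {η : q → K} {θ : K}
    (hη : η ᵥ* F = θ • η) (j : ℕ) : η ᵥ* F ^ j = θ ^ j • η := by
  induction j with
  | zero => simp
  | succ j ih => rw [pow_succ, ← vecMul_vecMul, ih, smul_vecMul, hη, smul_smul, pow_succ]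

theorem vecMul_mem_kalmanLeftKernel [CommRing K] {F : Matrix q q K} {G : Matrix q r K}
    {η : q → K} (hη : η ∈ kalmanLeftKernel F G) : η ᵥ* F ∈ kalmanLeftKernel F G := by
  rw [mem_kalmanLeftKernel] at hη ⊢
  intro j
  rw [vecMul_vecMul, ← Matrix.mul_assoc, ← pow_succ', hη]

theorem Module.End.exists_eigenvector_mem_of_mapsTo {V : Type*} [Field K] [IsAlgClosed K]
    [AddCommGroup V] [Module K V] [FiniteDimensional K V] (f : Module.End K V)
    {U : Submodule K V} (hU : U ≠ ⊥) (hfU : ∀ x ∈ U, f x ∈ U) :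
    ∃ θ : K, ∃ v ∈ U, v ≠ 0 ∧ f v = θ • v := by
  have : Nontrivial U := Submodule.nontrivial_iff_ne_bot.2 hU
  obtain ⟨θ, hθ⟩ := Module.End.exists_eigenvalue (f.restrict hfU)
  obtain ⟨v, hv⟩ := hθ.exists_hasEigenvector
  refine ⟨θ, v, v.2, by simpa using hv.2, ?_⟩
  simpa using congrArg Subtype.val hv.apply_eq_smul

-- The Popov–Belevitch–Hautus eigenvector test.
theorem kalmanLeftKernel_eq_bot_iff [Field K] [IsAlgClosed K] (F : Matrix q q K)
    (G : Matrix q r K) :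
    kalmanLeftKernel F G = ⊥ ↔
      ∀ (θ : K) (η : q → K), η ≠ 0 → η ᵥ* F = θ • η → η ᵥ* G ≠ 0 := by
  constructor
  · intro hbot θ η hη hF hG
    refine hη ((Submodule.eq_bot_iff _).1 hbot η (mem_kalmanLeftKernel.2 fun j => ?_))
    rw [← vecMul_vecMul, vecMul_pow_of_vecMul_eq_smul hF, smul_vecMul, hG, smul_zero]
  · intro hpbh
    by_contra hne
    obtain ⟨θ, η, hmem, hη, hF⟩ := Module.End.exists_eigenvector_mem_of_mapsTo
      F.vecMulLinear hne fun _ => vecMul_mem_kalmanLeftKernel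
    refine hpbh θ η hη hF ?_
    simpa using mem_kalmanLeftKernel.1 hmem 0

end LeftKernel

section BlockTriangular

variable {K a b c d : Type*} [CommRing K] [Fintype a] [Fintype b]

theorem sumElim_vecMul_fromBlocks_eq_smul_iff [DecidableEq a] (F₁₁ : Matrix a a K)
    (F₂₁ : Matrix b a K) (F₂₂ : Matrix b b K) (θ : K) (ξ : a → K) (η : b → K) :
    Sum.elim ξ η ᵥ* fromBlocks F₁₁ 0 F₂₁ F₂₂ = θ • Sum.elim ξ η ↔
      ξ ᵥ* (θ • (1 : Matrix a a K) - F₁₁) = η ᵥ* F₂₁ ∧ η ᵥ* F₂₂ = θ • η := by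
  rw [vecMul_fromBlocks, Sum.elim_comp_inl, Sum.elim_comp_inr, vecMul_zero, zero_add,
    Sum.smul_elim, Sum.elim_eq_elim_iff, vecMul_sub, vecMul_smul, vecMul_one,
    sub_eq_iff_eq_add', eq_comm (a := θ • ξ)]

theorem sumElim_vecMul_fromBlocks_zero_zero (G₁ : Matrix a c K) (G₂ : Matrix b d K)
    (ξ : a → K) (η : b → K) :
    Sum.elim ξ η ᵥ* fromBlocks G₁ 0 0 G₂ = Sum.elim (ξ ᵥ* G₁) (η ᵥ* G₂) := by
  simp [vecMul_fromBlocks]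

theorem pbh_fromBlocks_iff [DecidableEq a] (F₁₁ : Matrix a a K) (F₂₁ : Matrix b a K)
    (F₂₂ : Matrix b b K) (G₁ : Matrix a c K) (G₂ : Matrix b d K) :
    (∀ (θ : K) (w : a ⊕ b → K), w ≠ 0 → w ᵥ* fromBlocks F₁₁ 0 F₂₁ F₂₂ = θ • w →
        w ᵥ* fromBlocks G₁ 0 0 G₂ ≠ 0) ↔
      ((∀ (θ : K) (ξ : a → K), ξ ≠ 0 → ξ ᵥ* F₁₁ = θ • ξ → ξ ᵥ* G₁ ≠ 0) ∧
       (∀ (θ : K) (η : b → K) (ξ : a → K), η ≠ 0 → η ᵥ* F₂₂ = θ • η →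
          ξ ᵥ* (θ • (1 : Matrix a a K) - F₁₁) = η ᵥ* F₂₁ →
          Sum.elim (ξ ᵥ* G₁) (η ᵥ* G₂) ≠ 0)) := by
  constructor
  · intro h
    refine ⟨fun θ ξ hξ hF hG => ?_, fun θ η ξ hη hF₂₂ hF₂₁ => ?_⟩
    · refine h θ (Sum.elim ξ 0) (fun h0 => hξ (Sum.elim_eq_zero_iff.1 h0).1) ?_ ?_
      · rw [sumElim_vecMul_fromBlocks_eq_smul_iff, vecMul_sub, vecMul_smul, vecMul_one, hF,
          sub_self, zero_vecMul, zero_vecMul, smul_zero]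
        exact ⟨rfl, rfl⟩
      · rw [sumElim_vecMul_fromBlocks_zero_zero, hG, zero_vecMul, Sum.elim_zero_zero]
    · intro hG
      refine h θ (Sum.elim ξ η) (fun h0 => hη (Sum.elim_eq_zero_iff.1 h0).2)
        ((sumElim_vecMul_fromBlocks_eq_smul_iff _ _ _ _ _ _).2 ⟨hF₂₁, hF₂₂⟩) ?_
      rwa [sumElim_vecMul_fromBlocks_zero_zero]
  · rintro ⟨h₁, h₂⟩ θ w hw hF
    obtain ⟨ξ, η, rfl⟩ : ∃ ξ η, w = Sum.elim ξ η := ⟨_, _, (Sum.elim_comp_inl_inr w).symm⟩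
    obtain ⟨hF₂₁, hF₂₂⟩ := (sumElim_vecMul_fromBlocks_eq_smul_iff _ _ _ _ _ _).1 hF
    rw [sumElim_vecMul_fromBlocks_zero_zero]
    by_cases hη : η = 0
    · subst hη
      have hξ : ξ ≠ 0 := by
        rintro rfl
        exact hw Sum.elim_zero_zero
      rw [vecMul_sub, vecMul_smul, vecMul_one, zero_vecMul, sub_eq_zero] at hF₂₁
      exact fun h0 => h₁ θ ξ hξ hF₂₁.symm (Sum.elim_eq_zero_iff.1 h0).1
    · exact h₂ θ η ξ hη hF₂₂ hF₂₁

end BlockTriangular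

section Complexification

variable {a b : Type*}

theorem cmap_mul [Fintype b] {c : Type*} (M : Matrix a b ℝ) (M' : Matrix b c ℝ) :
    cmap (M * M') = cmap M * cmap M' :=
  Matrix.map_mul (f := Complex.ofRealHom)

theorem cmap_pow [Fintype a] [DecidableEq a] (M : Matrix a a ℝ) (j : ℕ) :
    cmap (M ^ j) = cmap M ^ j :=
  map_pow Complex.ofRealHom.mapMatrix M j

theorem cmap_fromBlocks {c d : Type*} (A : Matrix a c ℝ) (B : Matrix a d ℝ)
    (C : Matrix b c ℝ) (D : Matrix b d ℝ) :
    cmap (fromBlocks A B C D) = fromBlocks (cmap A) (cmap B) (cmap C) (cmap D) :=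
  fromBlocks_map A B C D _

theorem cmap_zero : cmap (0 : Matrix a b ℝ) = 0 :=
  Matrix.map_zero _ Complex.ofReal_zero

theorem vecMul_cmap_eq_zero_iff [Fintype a] (η : a → ℂ) (M : Matrix a b ℝ) :
    η ᵥ* cmap M = 0 ↔
      (fun i => (η i).re) ᵥ* M = 0 ∧ (fun i => (η i).im) ᵥ* M = 0 := by
  simp only [funext_iff, ← forall_and, Complex.ext_iff, Pi.zero_apply, Complex.zero_re,
    Complex.zero_im]
  simp [vecMul, dotProduct, cmap, Complex.re_sum, Complex.im_sum]

end Complexification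

theorem kalmanLeftKernel_cmap_eq_bot_iff {q r : Type*} [Fintype q] [DecidableEq q]
    (F : Matrix q q ℝ) (G : Matrix q r ℝ) :
    kalmanLeftKernel (cmap F) (cmap G) = ⊥ ↔ kalmanLeftKernel F G = ⊥ := by
  simp only [Submodule.eq_bot_iff, mem_kalmanLeftKernel, ← cmap_pow, ← cmap_mul,
    vecMul_cmap_eq_zero_iff, forall_and]
  constructor
  · intro h w hw
    have hcast := h (fun i => (w i : ℂ)) ⟨by simpa using hw, fun _ => zero_vecMul _⟩
    funext i
    simpa using congrFun hcast i
  · rintro h η ⟨hre, him⟩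
    funext i
    exact Complex.ext (congrFun (h _ hre) i) (congrFun (h _ him) i)

section Reachability

variable {q r : Type*} [Fintype q] [Fintype r] [DecidableEq q]

def reachableIn (F : Matrix q q ℝ) (G : Matrix q r ℝ) : ℕ → Submodule ℝ (q → ℝ)
  | 0 => ⊥
  | T + 1 => reachableIn F G T ⊔ LinearMap.range (F ^ T * G).mulVecLin

theorem monotone_reachableIn (F : Matrix q q ℝ) (G : Matrix q r ℝ) :
    Monotone (reachableIn F G) :=
  monotone_nat_of_le_succ fun _ => le_sup_left

theorem exists_trajectory_of_mem_reachableIn (F : Matrix q q ℝ) (G : Matrix q r ℝ) {T : ℕ}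
    {v : q → ℝ} (hv : v ∈ reachableIn F G T) (x₀ : q → ℝ) :
    ∃ (u : ℕ → r → ℝ) (x : ℕ → q → ℝ), x 0 = x₀ ∧
      (∀ k, x (k + 1) = F *ᵥ x k + G *ᵥ u k) ∧ x T = F ^ T *ᵥ x₀ + v := by
  induction T generalizing v x₀ with
  | zero =>
    rw [reachableIn, Submodule.mem_bot] at hv
    refine ⟨0, fun k => F ^ k *ᵥ x₀, by simp, fun k => ?_, by simp [hv]⟩
    dsimp only
    rw [pow_succ', ← mulVec_mulVec, Pi.zero_apply, mulVec_zero, add_zero]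
  | succ T ih =>
    obtain ⟨s, hs, _, ⟨g, rfl⟩, rfl⟩ := Submodule.mem_sup.1 hv
    -- spend the first input on `g` and reach `s` from the resulting state in `T` steps
    obtain ⟨u, x, hx₀, hx, hxT⟩ := ih hs (F *ᵥ x₀ + G *ᵥ g)
    refine ⟨fun | 0 => g | k + 1 => u k, fun | 0 => x₀ | k + 1 => x k, rfl, ?_, ?_⟩
    · rintro (_ | k)
      · exact hx₀
      · exact hx k
    · simp only [hxT, mulVec_add, mulVec_mulVec, ← pow_succ, mulVecLin_apply]
      abel

theorem controllable_of_reachableIn_eq_top {F : Matrix q q ℝ} {G : Matrix q r ℝ} {T : ℕ}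
    (hT : reachableIn F G T = ⊤) : Controllable F G := by
  intro x₀ xf
  obtain ⟨u, x, hx₀, hx, hxT⟩ := exists_trajectory_of_mem_reachableIn F G
    (hT ▸ Submodule.mem_top : xf - F ^ T *ᵥ x₀ ∈ reachableIn F G T) x₀
  exact ⟨T, u, x, hx₀, hx, by rw [hxT, add_sub_cancel]⟩

theorem exists_reachableIn_eq_top {F : Matrix q q ℝ} {G : Matrix q r ℝ}
    (h : kalmanLeftKernel F G = ⊥) : ∃ T, reachableIn F G T = ⊤ := by
  obtain ⟨T, hT⟩ :=
    WellFoundedGT.monotone_chain_condition ⟨reachableIn F G, monotone_reachableIn F G⟩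
  refine ⟨T, Submodule.eq_top_of_forall_dotProduct_eq_zero fun w hw => ?_⟩
  refine (Submodule.eq_bot_iff _).1 h w (mem_kalmanLeftKernel.2 fun j => funext fun c => ?_)
  classical
  have hcol : (F ^ j * G) *ᵥ Pi.single c 1 ∈ reachableIn F G T := by
    have hstab : reachableIn F G T = reachableIn F G (max T (j + 1)) := hT _ (le_max_left _ _)
    rw [hstab]
    exact monotone_reachableIn F G (le_max_right T (j + 1)) (Submodule.mem_sup_right ⟨_, rfl⟩)
  simpa only [dotProduct_mulVec, dotProduct_single, mul_one, Pi.zero_apply] using hw _ hcol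

theorem kalmanLeftKernel_eq_bot_of_controllable {F : Matrix q q ℝ} {G : Matrix q r ℝ}
    (hc : Controllable F G) : kalmanLeftKernel F G = ⊥ := by
  refine (Submodule.eq_bot_iff _).2 fun w hw => ?_
  rw [mem_kalmanLeftKernel] at hw
  -- steer the origin to `w` itself
  obtain ⟨T, u, x, hx₀, hx, hxT⟩ := hc 0 w
  have horth : ∀ k j, (w ᵥ* F ^ j) ⬝ᵥ x k = 0 := by
    intro k
    induction k with
    | zero => simp [hx₀]
    | succ k ih =>
      intro j
      rw [hx k, dotProduct_add, dotProduct_mulVec, dotProduct_mulVec, vecMul_vecMul,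
        vecMul_vecMul, ← pow_succ, ih, hw, zero_dotProduct, add_zero]
  simpa [hxT] using horth T 0

theorem controllable_iff_kalmanLeftKernel_eq_bot (F : Matrix q q ℝ) (G : Matrix q r ℝ) :
    Controllable F G ↔ kalmanLeftKernel F G = ⊥ :=
  ⟨kalmanLeftKernel_eq_bot_of_controllable, fun h =>
    (exists_reachableIn_eq_top h).elim fun _ => controllable_of_reachableIn_eq_top⟩

theorem controllable_iff_pbh (F : Matrix q q ℝ) (G : Matrix q r ℝ) :
    Controllable F G ↔
      ∀ (θ : ℂ) (η : q → ℂ), η ≠ 0 → η ᵥ* cmap F = θ • η → η ᵥ* cmap G ≠ 0 := by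
  rw [controllable_iff_kalmanLeftKernel_eq_bot, ← kalmanLeftKernel_cmap_eq_bot_iff,
    kalmanLeftKernel_eq_bot_iff]

end Reachability

theorem twoLayer_driveResponse_controllable_iff_general
    (N n p : ℕ)
    (Φ11 Φ22 Φ21 : Matrix (Fin N × Fin n) (Fin N × Fin n) ℝ)
    (Ψ11 Ψ22 : Matrix (Fin N × Fin n) (Fin N × Fin p) ℝ) :
    Controllable (Matrix.fromBlocks Φ11 0 Φ21 Φ22) (Matrix.fromBlocks Ψ11 0 0 Ψ22) ↔
      ((∀ (θ : ℂ) (η : Fin N × Fin n → ℂ), η ≠ 0 →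
          η ᵥ* cmap Φ11 = θ • η → η ᵥ* cmap Ψ11 ≠ 0) ∧
       (∀ (θ : ℂ) (η ξ : Fin N × Fin n → ℂ), η ≠ 0 →
          η ᵥ* cmap Φ22 = θ • η →
          ξ ᵥ* (θ • (1 : Matrix (Fin N × Fin n) (Fin N × Fin n) ℂ) - cmap Φ11)
            = η ᵥ* cmap Φ21 →
          Sum.elim (ξ ᵥ* cmap Ψ11) (η ᵥ* cmap Ψ22) ≠ 0)) := by
  rw [controllable_iff_pbh, cmap_fromBlocks, cmap_fromBlocks, cmap_zero, cmap_zero,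
    pbh_fromBlocks_iff]

/-- when `Φ_s` is nonsingular, the two conditions of Theorem 2 are
necessary and sufficient for controllability of the two-layer drive-response
networked sampled-data system. -/
theorem twoLayer_driveResponse_controllable_iff
    (N n m p : ℕ)
    (A1 A2 : Matrix (Fin n) (Fin n) ℝ) (B1 B2 : Matrix (Fin n) (Fin p) ℝ)
    (C1 C2 : Matrix (Fin m) (Fin n) ℝ) (H1 H2 : Matrix (Fin n) (Fin m) ℝ)
    (W1 W2 : Matrix (Fin N) (Fin N) ℝ) (Δ1 Δ2 : Matrix (Fin N) (Fin N) ℝ)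
    (hΔ1d : Δ1.IsDiag) (hΔ2d : Δ2.IsDiag)
    (hΔ1v : ∀ i, Δ1 i i = 0 ∨ Δ1 i i = 1) (hΔ2v : ∀ i, Δ2 i i = 0 ∨ Δ2 i i = 1)
    (D21 : Matrix (Fin N) (Fin N) ℝ) (P21 : Matrix (Fin n) (Fin m) ℝ)
    (h : ℝ) (hh : 0 < h)
    (Φ11 Φ22 Φ21 : Matrix (Fin N × Fin n) (Fin N × Fin n) ℝ)
    (Ψ11 Ψ22 : Matrix (Fin N × Fin n) (Fin N × Fin p) ℝ)
    (hΦ11 : Φ11 = (1 : Matrix (Fin N) (Fin N) ℝ) ⊗ₖ matExp (h • A1)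
        + W1 ⊗ₖ (intExp A1 h * H1 * C1))
    (hΦ22 : Φ22 = (1 : Matrix (Fin N) (Fin N) ℝ) ⊗ₖ matExp (h • A2)
        + W2 ⊗ₖ (intExp A2 h * H2 * C2))
    (hΦ21 : Φ21 = D21 ⊗ₖ (intExp A2 h * P21 * C1))
    (hΨ11 : Ψ11 = Δ1 ⊗ₖ (intExp A1 h * B1))
    (hΨ22 : Ψ22 = Δ2 ⊗ₖ (intExp A2 h * B2))
    -- 0 is not an eigenvalue of Φ_s, i.e. Φ_s is invertible
    (hns : ¬ IsEig (cmap (Matrix.fromBlocks Φ11 0 Φ21 Φ22)) 0) :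
    Controllable (Matrix.fromBlocks Φ11 0 Φ21 Φ22) (Matrix.fromBlocks Ψ11 0 0 Ψ22) ↔
      ((∀ (θ : ℂ) (η : Fin N × Fin n → ℂ), η ≠ 0 →
          η ᵥ* cmap Φ11 = θ • η → η ᵥ* cmap Ψ11 ≠ 0) ∧
       (∀ (θ : ℂ) (η ξ : Fin N × Fin n → ℂ), η ≠ 0 →
          η ᵥ* cmap Φ22 = θ • η →
          ξ ᵥ* (θ • (1 : Matrix (Fin N × Fin n) (Fin N × Fin n) ℂ) - cmap Φ11)
            = η ᵥ* cmap Φ21 →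
          Sum.elim (ξ ᵥ* cmap Ψ11) (η ᵥ* cmap Ψ22) ≠ 0)) :=
  twoLayer_driveResponse_controllable_iff_general N n p Φ11 Φ22 Φ21 Ψ11 Ψ22
end
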